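/- Let c be a cycle in the directed graph E and f : 𝒯_E* → ℒ(R) an order-reversing function. Then the saturation f̄ of f satisfies f̄( c̄⁰ , ∅ ) = f( c̄⁰ , ∅ ), where c̄⁰ is the hereditary saturated closure of the vertex set of c. -/

import Mathlib

/-! The pair `Q = (c̄⁰, ∅)` is completely join-prime: if `Q` lies below the supremum of a
family, some member contains a vertex `v₀` of `c`, hence all of `c̄⁰`. Otherwise no member meets
the set `W` of vertices with a nontrivial path to `v₀`; since `v₀` lies on the cycle, every vertex
of `W` emits an edge into `W`, so the saturation of the union cannot enter `W` either, although it
contains `v₀`.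

Consequently `g ⊓ χ`, where `χ` is `f Q` on the up-set of `Q` and `⊤` elsewhere, is again
saturated, and it lies above `f` because `f` is order-reversing. Minimality of `g` gives
`g Q ≤ f Q`. -/


/-- A directed graph: vertices, edges, and source/range maps. -/
structure DGraph where
  V : Type
  E : Type
  src : E → V
  rng : E → V

namespace DGraph

variable (G : DGraph)

/-- A subset of vertices is hereditary if ranges of edges emitted from it stay in it. -/
def Hereditary (H : Set G.V) : Prop := ∀ e : G.E, G.src e ∈ H → G.rng e ∈ H

/-- A vertex is regular if it emits a nonzero finite number of edges. -/
def Regular (v : G.V) : Prop :=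
  {e : G.E | G.src e = v}.Finite ∧ {e : G.E | G.src e = v}.Nonempty

/-- A vertex is singular if it is a sink or an infinite emitter. -/
def Singular (v : G.V) : Prop := ¬ Regular G v

/-- A vertex emitting infinitely many edges. -/
def InfEmitter (v : G.V) : Prop := {e : G.E | G.src e = v}.Infinite

/-- A subset is saturated if it contains every regular vertex all of whose
emitted edges have range in the subset. -/
def Saturated (H : Set G.V) : Prop :=
  ∀ v : G.V, Regular G v → (∀ e : G.E, G.src e = v → G.rng e ∈ H) → v ∈ H

/-- A breaking vertex for a hereditary set `H`. -/
def Breaking (H : Set G.V) (v : G.V) : Prop :=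
  InfEmitter G v ∧ v ∉ H ∧
    {e : G.E | G.src e = v ∧ G.rng e ∉ H}.Finite ∧
    {e : G.E | G.src e = v ∧ G.rng e ∉ H}.Nonempty

/-- `X` contains `H`, is hereditary saturated, and absorbs vertices of `S`
all of whose emitted edges have range in `X`. -/
def SClosed (H S X : Set G.V) : Prop :=
  H ⊆ X ∧ Hereditary G X ∧ Saturated G X ∧
    ∀ v ∈ S, (∀ e : G.E, G.src e = v → G.rng e ∈ X) → v ∈ X

/-- The `S`-saturation of `H`: the smallest `SClosed` set. -/
def SSat (H S : Set G.V) : Set G.V := ⋂₀ {X | SClosed G H S X}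

end DGraph

namespace DGraph

variable (G : DGraph)

/-- An admissible pair: a hereditary saturated set of vertices together with a
set of breaking vertices for it. -/
structure APair (G : DGraph) where
  H : Set G.V
  S : Set G.V
  hered : Hereditary G H
  sat : Saturated G H
  brk : ∀ v ∈ S, Breaking G H v

/-- The order on admissible pairs: `(H₁,S₁) ≤ (H₂,S₂)` iff `H₁ ⊆ H₂` and `S₁ ⊆ H₂ ∪ S₂`. -/
def APle (P Q : APair G) : Prop := P.H ⊆ Q.H ∧ P.S ⊆ Q.H ∪ Q.S

end DGraph

namespace DGraph

/-- `Q` is the least upper bound of the family `P` of admissible pairs. -/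
def IsSupFam {ι : Type} (G : DGraph) (P : ι → APair G) (Q : APair G) : Prop :=
  (∀ i, APle G (P i) Q) ∧ ∀ R : APair G, (∀ i, APle G (P i) R) → APle G Q R

end DGraph

namespace DGraph

/-- An admissible pair is nontrivial if it is not `(∅, ∅)`; nontrivial pairs form `𝒯_E*`. -/
def Nontriv (G : DGraph) (P : APair G) : Prop := ¬ (P.H = ∅ ∧ P.S = ∅)

/-- A saturated function `𝒯_E* → ℒ(R)`: it sends suprema of (nonempty) families of
nontrivial admissible pairs to intersections of ideals. -/
def SatFun (G : DGraph) (R : Type) [CommRing R] (f : APair G → Ideal R) : Prop :=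
  ∀ (ι : Type) [Nonempty ι] (P : ι → APair G) (Q : APair G),
    (∀ i, Nontriv G (P i)) → Nontriv G Q → IsSupFam G P Q →
      f Q = ⨅ i, f (P i)

end DGraph

theorem List.IsChain.reflTransGen_head {α : Type*} {r : α → α → Prop} {l : List α}
    (hl : l.IsChain r) (hne : l ≠ []) : ∀ w ∈ l, Relation.ReflTransGen r (l.head hne) w :=
  hl.induction _ l (fun _ _ hxy hx => hx.tail hxy) (fun _ => .refl)

namespace DGraph

variable (G : DGraph)

def Adj (a b : G.V) : Prop := ∃ e, G.src e = a ∧ G.rng e = b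

variable {G}

theorem sClosed_sSat (H S : Set G.V) : SClosed G H S (SSat G H S) := by
  refine ⟨fun v hv => Set.mem_sInter.mpr fun X hX => hX.1 hv,
    fun e he => Set.mem_sInter.mpr fun X hX => hX.2.1 e (Set.mem_sInter.mp he X hX),
    fun v hreg hall => Set.mem_sInter.mpr fun X hX =>
      hX.2.2.1 v hreg fun e hsrc => Set.mem_sInter.mp (hall e hsrc) X hX,
    fun v hvS hall => Set.mem_sInter.mpr fun X hX =>
      hX.2.2.2 v hvS fun e hsrc => Set.mem_sInter.mp (hall e hsrc) X hX⟩

theorem sSat_subset {H S X : Set G.V} (hX : SClosed G H S X) : SSat G H S ⊆ X :=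
  Set.sInter_subset_of_mem hX

theorem subset_sSat (H S : Set G.V) : H ⊆ SSat G H S := (sClosed_sSat H S).1

theorem Hereditary.mem_of_adj {H : Set G.V} (hH : Hereditary G H) {a b : G.V}
    (hab : G.Adj a b) (ha : a ∈ H) : b ∈ H := by
  obtain ⟨e, rfl, rfl⟩ := hab
  exact hH e ha

theorem Hereditary.mem_of_reflTransGen {H : Set G.V} (hH : Hereditary G H) {a b : G.V}
    (hab : Relation.ReflTransGen G.Adj a b) (ha : a ∈ H) : b ∈ H := by
  induction hab with
  | refl => exact ha
  | tail _ hbc ih => exact hH.mem_of_adj hbc ih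

/-- Removing `W` from `SSat G H S` leaves an `S`-closed set. -/
theorem disjoint_sSat {H S W : Set G.V} (hpred : ∀ a b, G.Adj a b → b ∈ W → a ∈ W)
    (hemit : ∀ v ∈ W, ∃ e, G.src e = v ∧ G.rng e ∈ W) (hHW : Disjoint H W) :
    Disjoint (SSat G H S) W := by
  have hsat := sClosed_sSat (G := G) H S
  have hnotW : ∀ v, (∀ e, G.src e = v → G.rng e ∈ SSat G H S \ W) → v ∉ W := fun v hv hvW =>
    let ⟨e, he, heW⟩ := hemit v hvW
    (hv e he).2 heW
  have hclosed : SClosed G H S (SSat G H S \ W) :=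
    ⟨Set.subset_sdiff.mpr ⟨hsat.1, hHW⟩,
      fun e he => ⟨hsat.2.1 e he.1, fun hW => he.2 (hpred _ _ ⟨e, rfl, rfl⟩ hW)⟩,
      fun v hreg hall => ⟨hsat.2.2.1 v hreg fun e he => (hall e he).1, hnotW v hall⟩,
      fun v hvS hall => ⟨hsat.2.2.2 v hvS fun e he => (hall e he).1, hnotW v hall⟩⟩
  exact Set.disjoint_left.mpr fun v hv => (sSat_subset hclosed hv).2

theorem Breaking.of_subset {H X : Set G.V} {v : G.V} (hv : Breaking G H v) (hHX : H ⊆ X)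
    (hvX : v ∉ X) (habsorb : (∀ e, G.src e = v → G.rng e ∈ X) → v ∈ X) : Breaking G X v := by
  obtain ⟨hinf, -, hfin, -⟩ := hv
  refine ⟨hinf, hvX, hfin.subset fun e he => ⟨he.1, fun heH => he.2 (hHX heH)⟩, ?_⟩
  by_contra hempty
  exact hvX (habsorb fun e he => by_contra fun heX => hempty ⟨e, he, heX⟩)

theorem aPle_refl (P : APair G) : APle G P P := ⟨subset_rfl, Set.subset_union_right⟩

theorem aPle_trans {P Q R : APair G} (hPQ : APle G P Q) (hQR : APle G Q R) : APle G P R :=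
  ⟨hPQ.1.trans hQR.1, hPQ.2.trans (Set.union_subset (hQR.1.trans Set.subset_union_left) hQR.2)⟩

section Sup

variable {ι : Type} (P : ι → APair G)

def iSupPair : APair G where
  H := SSat G (⋃ i, (P i).H) (⋃ i, (P i).S)
  S := (⋃ i, (P i).S) \ SSat G (⋃ i, (P i).H) (⋃ i, (P i).S)
  hered := (sClosed_sSat _ _).2.1
  sat := (sClosed_sSat _ _).2.2.1
  brk := by
    rintro v ⟨hvS, hvX⟩
    obtain ⟨i, hvi⟩ := Set.mem_iUnion.mp hvS
    exact ((P i).brk v hvi).of_subset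
      ((Set.subset_iUnion (fun i => (P i).H) i).trans (subset_sSat _ _)) hvX
      ((sClosed_sSat _ _).2.2.2 v hvS)

theorem aPle_iSupPair (i : ι) : APle G (P i) (iSupPair P) := by
  refine ⟨(Set.subset_iUnion (fun i => (P i).H) i).trans (subset_sSat _ _), fun v hv => ?_⟩
  by_cases h : v ∈ (iSupPair P).H
  · exact Or.inl h
  · exact Or.inr ⟨Set.mem_iUnion.mpr ⟨i, hv⟩, h⟩

end Sup

def CompletelyJoinPrime (Q : APair G) : Prop :=
  ∀ (ι : Type) (P : ι → APair G) (Q' : APair G), IsSupFam G P Q' → APle G Q Q' →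
    ∃ i, APle G Q (P i)

theorem completelyJoinPrime_of_transGen {C : Set G.V} {v₀ : G.V}
    (hloop : Relation.TransGen G.Adj v₀ v₀) (hv₀ : v₀ ∈ C)
    (hC : ∀ w ∈ C, Relation.ReflTransGen G.Adj v₀ w) {Q : APair G}
    (hQH : Q.H = SSat G C ∅) (hQS : Q.S = ∅) : CompletelyJoinPrime Q := by
  intro ι P Q' hsup hle
  by_contra! hno
  have hv₀P : ∀ i, v₀ ∉ (P i).H := fun i hv₀i => hno i
    ⟨hQH ▸ sSat_subset ⟨fun w hw => (P i).hered.mem_of_reflTransGen (hC w hw) hv₀i,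
      (P i).hered, (P i).sat, fun _ hv => absurd hv (Set.notMem_empty _)⟩,
      hQS ▸ Set.empty_subset _⟩
  set W : Set G.V := {v | Relation.TransGen G.Adj v v₀}
  have hpred : ∀ a b, G.Adj a b → b ∈ W → a ∈ W := fun _ _ hab hb => .head hab hb
  have hemit : ∀ v ∈ W, ∃ e, G.src e = v ∧ G.rng e ∈ W := by
    intro v hv
    obtain ⟨b, ⟨e, rfl, rfl⟩, hb⟩ := Relation.TransGen.head'_iff.mp hv
    exact ⟨e, rfl, .trans_right hb hloop⟩
  have hHW : Disjoint (⋃ i, (P i).H) W := Set.disjoint_left.mpr fun v hv hvW =>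
    let ⟨i, hvi⟩ := Set.mem_iUnion.mp hv
    hv₀P i ((P i).hered.mem_of_reflTransGen hvW.to_reflTransGen hvi)
  have hv₀Q' : v₀ ∈ (iSupPair P).H :=
    (aPle_trans hle (hsup.2 _ (aPle_iSupPair P))).1 (hQH ▸ subset_sSat C ∅ hv₀)
  exact Set.disjoint_left.mp (disjoint_sSat hpred hemit hHW) hv₀Q' hloop

theorem isChain_map_src_adj {L : List G.E} (hchain : L.IsChain (fun e f => G.rng e = G.src f)) :
    (L.map G.src).IsChain G.Adj :=
  List.isChain_map_of_isChain _ (fun e _ h => ⟨e, rfl, h⟩) hchain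

theorem completelyJoinPrime_of_cycle {L : List G.E} (hL : L ≠ [])
    (hchain : L.IsChain (fun e f => G.rng e = G.src f))
    (hclosed : G.rng (L.getLast hL) = G.src (L.head hL)) {Q : APair G}
    (hQH : Q.H = SSat G {v | v ∈ L.map G.src} ∅) (hQS : Q.S = ∅) : CompletelyJoinPrime Q := by
  have hne : L.map G.src ≠ [] := by simpa using hL
  have hvert := isChain_map_src_adj hchain
  have hloop : Relation.TransGen G.Adj ((L.map G.src).head hne) ((L.map G.src).head hne) :=
    .tail' (List.relationReflTransGen_of_exists_isChain _ hvert hne)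
      ⟨L.getLast hL, by rw [List.getLast_map], by rw [List.head_map, hclosed]⟩
  exact completelyJoinPrime_of_transGen hloop (List.head_mem hne) (hvert.reflTransGen_head hne)
    hQH hQS

section Saturation

variable {R : Type} [CommRing R]

open Classical in
noncomputable def upIndicator (Q : APair G) (I : Ideal R) (P : APair G) : Ideal R :=
  if APle G Q P then I else ⊤

theorem upIndicator_eq_iInf {Q : APair G} (hQ : CompletelyJoinPrime Q) (I : Ideal R) {ι : Type}
    {P : ι → APair G} {Q' : APair G} (hsup : IsSupFam G P Q') :
    upIndicator Q I Q' = ⨅ i, upIndicator Q I (P i) := by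
  by_cases hle : APle G Q Q'
  · obtain ⟨i₀, hi₀⟩ := hQ ι P Q' hsup hle
    rw [upIndicator, if_pos hle]
    refine le_antisymm (le_iInf fun i => ?_) (iInf_le_of_le i₀ (by rw [upIndicator, if_pos hi₀]))
    unfold upIndicator
    split_ifs <;> simp
  · have hnot : ∀ i, ¬ APle G Q (P i) := fun i hi => hle (aPle_trans hi (hsup.1 i))
    simp [upIndicator, hle, hnot]

theorem SatFun.inf_upIndicator {g : APair G → Ideal R} (hg : SatFun G R g) {Q : APair G}
    (hQ : CompletelyJoinPrime Q) (I : Ideal R) : SatFun G R (fun P => g P ⊓ upIndicator Q I P) := by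
  intro ι _ P Q' hP hQ' hsup
  dsimp only
  rw [hg ι P Q' hP hQ' hsup, upIndicator_eq_iInf hQ I hsup, iInf_inf_eq]

theorem saturation_eq_of_completelyJoinPrime {f g : APair G → Ideal R} {Q : APair G}
    (hQ : CompletelyJoinPrime Q) (hQnt : Nontriv G Q)
    (hf : ∀ P, Nontriv G P → APle G Q P → f P ≤ f Q) (hg : SatFun G R g)
    (hge : ∀ P, Nontriv G P → f P ≤ g P)
    (hmin : ∀ h : APair G → Ideal R, SatFun G R h →
      (∀ P, Nontriv G P → f P ≤ h P) → ∀ P, Nontriv G P → g P ≤ h P) :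
    g Q = f Q := by
  have hfh : ∀ P, Nontriv G P → f P ≤ g P ⊓ upIndicator Q (f Q) P := fun P hP => by
    refine le_inf (hge P hP) ?_
    unfold upIndicator
    split_ifs with hle
    exacts [hf P hP hle, le_top]
  have hgQ := hmin _ (hg.inf_upIndicator hQ (f Q)) hfh Q hQnt
  rw [upIndicator, if_pos (aPle_refl Q)] at hgQ
  exact le_antisymm (hgQ.trans inf_le_right) (hge Q hQnt)

end Saturation

end DGraph

theorem saturation_at_cycle_general {R : Type} [CommRing R] (G : DGraph)
    (L : List G.E) (hL : L ≠ [])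
    (hchain : L.Chain' (fun e f => G.rng e = G.src f))
    (hclosed : G.rng (L.getLast hL) = G.src (L.head hL))
    (f g : DGraph.APair G → Ideal R)
    (hf : ∀ P Q : DGraph.APair G, DGraph.Nontriv G P → DGraph.Nontriv G Q →
      DGraph.APle G P Q → f Q ≤ f P)
    (hg : DGraph.SatFun G R g)
    (hge : ∀ P, DGraph.Nontriv G P → f P ≤ g P)
    (hmin : ∀ h : DGraph.APair G → Ideal R, DGraph.SatFun G R h →
      (∀ P, DGraph.Nontriv G P → f P ≤ h P) →
      ∀ P, DGraph.Nontriv G P → g P ≤ h P)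
    (Q : DGraph.APair G)
    (hQH : Q.H = DGraph.SSat G {v : G.V | v ∈ L.map G.src} ∅)
    (hQS : Q.S = ∅) :
    g Q = f Q := by
  have hv₀ : G.src (L.head hL) ∈ Q.H :=
    hQH ▸ DGraph.subset_sSat _ ∅ (List.mem_map_of_mem (List.head_mem hL))
  have hQnt : DGraph.Nontriv G Q := fun h => Set.notMem_empty _ (h.1 ▸ hv₀)
  exact DGraph.saturation_eq_of_completelyJoinPrime
    (DGraph.completelyJoinPrime_of_cycle hL hchain hclosed hQH hQS) hQnt
    (fun P hP => hf Q P hQnt hP) hg hge hmin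

/-- if `c` is a cycle in `E` and `f` is order-reversing, then the
saturation `g` of `f` agrees with `f` at the admissible pair `(c̄⁰, ∅)`, where
`c̄⁰` is the hereditary saturated closure of the vertex set of `c`. -/
theorem saturation_at_cycle {R : Type} [CommRing R] (G : DGraph)
    (L : List G.E) (hL : L ≠ [])
    (hchain : L.Chain' (fun e f => G.rng e = G.src f))
    (hclosed : G.rng (L.getLast hL) = G.src (L.head hL))
    (hnodup : (L.map G.src).Nodup)
    (f g : DGraph.APair G → Ideal R)
    (hf : ∀ P Q : DGraph.APair G, DGraph.Nontriv G P → DGraph.Nontriv G Q →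
      DGraph.APle G P Q → f Q ≤ f P)
    (hg : DGraph.SatFun G R g)
    (hge : ∀ P, DGraph.Nontriv G P → f P ≤ g P)
    (hmin : ∀ h : DGraph.APair G → Ideal R, DGraph.SatFun G R h →
      (∀ P, DGraph.Nontriv G P → f P ≤ h P) →
      ∀ P, DGraph.Nontriv G P → g P ≤ h P)
    (Q : DGraph.APair G)
    (hQH : Q.H = DGraph.SSat G {v : G.V | v ∈ L.map G.src} ∅)
    (hQS : Q.S = ∅) :
    g Q = f Q :=
  saturation_at_cycle_general G L hL hchain hclosed f g hf hg hge hmin Q hQH hQS
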